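/- arXiv:1711.01181 — 5 statements merged into one kernel-verified Lean document; each statement's English description precedes it below -/
import Mathlib

section
/- Let K be a nonempty compact subset of ℝⁿ and ε > 0. Then the boundary of the closed ε-neighborhood N_ε(K) = {x : dist(x,K) ≤ ε} has Lebesgue measure zero. -/
open MeasureTheory Metric Set

/-- The boundary of the closed ε-neighborhood of a nonempty compact set in ℝⁿ has
Lebesgue measure zero. -/
theorem stmt0 (n : ℕ) (K : Set (EuclideanSpace ℝ (Fin n)))
    (hKne : K.Nonempty) (hKc : IsCompact K) (ε : ℝ) (hε : 0 < ε) :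
    volume (frontier {x : EuclideanSpace ℝ (Fin n) | Metric.infDist x K ≤ ε}) = 0 := by
  set μ : Measure (EuclideanSpace ℝ (Fin n)) := volume
  set S : Set (EuclideanSpace ℝ (Fin n)) := {x : EuclideanSpace ℝ (Fin n) | Metric.infDist x K ≤ ε} with hS
  set F : Set (EuclideanSpace ℝ (Fin n)) := frontier S with hF
  -- S is closed, the sublevel {<ε} is open and contained in the interior
  have hcont : Continuous fun x : EuclideanSpace ℝ (Fin n) => Metric.infDist x K :=
    continuous_infDist_pt K
  have hSclosed : IsClosed S := by rw [hS]; exact isClosed_le hcont continuous_const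
  have hUopen : IsOpen {x : EuclideanSpace ℝ (Fin n) | Metric.infDist x K < ε} :=
    isOpen_lt hcont continuous_const
  have hUsub : {x : EuclideanSpace ℝ (Fin n) | Metric.infDist x K < ε} ⊆ interior S :=
    hUopen.subset_interior_iff.2 fun x hx => (le_of_lt hx : Metric.infDist x K ≤ ε)
  -- every frontier point has infDist exactly ε
  have hFr : ∀ x ∈ F, Metric.infDist x K = ε := by
    intro x hx
    have h1 : x ∈ S := hSclosed.closure_eq ▸ hx.1
    have h2 : ¬ Metric.infDist x K < ε := fun h => hx.2 (hUsub h)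
    exact le_antisymm h1 (not_lt.1 h2)
  -- suppose for contradiction μ F ≠ 0
  by_contra hμF
  have hFm : MeasurableSet F := isClosed_frontier.measurableSet
  -- density theorem: a.e. point of F is a density point
  have hden := Besicovitch.ae_tendsto_measure_inter_div μ F
  have hpos : μ.restrict F ≠ 0 := by
    rw [Ne, Measure.restrict_eq_zero]; exact hμF
  have : (ae (μ.restrict F)).NeBot := ae_neBot.2 hpos
  -- extract a density point x ∈ F
  obtain ⟨x, hxF, hx⟩ :
      ∃ x, x ∈ F ∧ Filter.Tendsto
        (fun r => μ (F ∩ closedBall x r) / μ (closedBall x r)) (nhdsWithin 0 (Ioi 0))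
        (nhds 1) := by
    have hev : ∀ᵐ x ∂μ.restrict F, x ∈ F ∧ Filter.Tendsto
        (fun r => μ (F ∩ closedBall x r) / μ (closedBall x r)) (nhdsWithin 0 (Ioi 0))
        (nhds 1) := by
      filter_upwards [hden, ae_restrict_mem hFm] with x h1 h2 using ⟨h2, h1⟩
    exact hev.exists
  -- nearest point y in K
  obtain ⟨y, hyK, hxy⟩ := hKc.exists_infDist_eq_dist hKne x
  have hdxy : dist x y = ε := by rw [← hxy]; exact hFr x hxF
  -- the constant c = μ(ball 0 1)
  set c : ENNReal := μ (ball (0:EuclideanSpace ℝ (Fin n)) 1) with hc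
  have hc0 : c ≠ 0 := (measure_ball_pos μ 0 one_pos).ne'
  have hctop : c ≠ ⊤ := measure_ball_lt_top.ne
  set L : ENNReal := ENNReal.ofReal (1 - (1/2:ℝ)^n) with hL
  -- key: for all small r > 0, the density ratio is at most L
  have hbound : ∀ᶠ r in nhdsWithin 0 (Ioi 0),
      μ (F ∩ closedBall x r) / μ (closedBall x r) ≤ L := by
    filter_upwards [Ioo_mem_nhdsGT_of_mem (Set.mem_Ico.2 ⟨le_refl 0, hε⟩)] with r hr
    obtain ⟨hr0, hrε⟩ := hr
    -- shifted center m
    set m : EuclideanSpace ℝ (Fin n) := x + (r/(2*ε)) • (y - x) with hm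
    have hεne : ε ≠ 0 := hε.ne'
    have hnorm : ‖y - x‖ = ε := by
      rw [← dist_eq_norm, dist_comm]; exact hdxy
    have hdmx : dist m x = r / 2 := by
      rw [hm, dist_eq_norm, add_sub_cancel_left, norm_smul, hnorm,
        Real.norm_eq_abs, abs_of_pos (by positivity)]
      field_simp
    have hfrac : r / (2*ε) < 1 := by
      rw [div_lt_one (by positivity)]; linarith
    have hdmy : dist m y = ε - r / 2 := by
      have hmy : m - y = (1 - r/(2*ε)) • (x - y) := by
        rw [hm]; module
      rw [dist_eq_norm, hmy, norm_smul, Real.norm_eq_abs, ← dist_eq_norm, hdxy,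
        abs_of_pos (by linarith)]
      field_simp
    -- the small ball is inside the interior of S
    have hball_int : ball m (r/2) ⊆ interior S := by
      intro w hw
      apply hUsub
      show Metric.infDist w K < ε
      have : dist w y < ε := by
        calc dist w y ≤ dist w m + dist m y := dist_triangle w m y
          _ < r/2 + (ε - r/2) := by rw [hdmy]; exact add_lt_add_of_lt_of_le (mem_ball.1 hw) le_rfl
          _ = ε := by ring
      exact lt_of_le_of_lt (Metric.infDist_le_dist_of_mem hyK) this
    have hball_sub : ball m (r/2) ⊆ closedBall x r := by
      intro w hw
      have : dist w x ≤ dist w m + dist m x := dist_triangle w m x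
      rw [mem_closedBall]
      rw [mem_ball] at hw
      rw [hdmx] at this
      linarith
    -- F misses the interior of S
    have hdisj : F ∩ ball m (r/2) = ∅ := by
      rw [Set.eq_empty_iff_forall_notMem]
      rintro w ⟨hw1, hw2⟩
      exact hw1.2 (hball_int hw2)
    -- measure estimate
    have hsub : F ∩ closedBall x r ⊆ closedBall x r \ ball m (r/2) := by
      rintro w ⟨hw1, hw2⟩
      refine ⟨hw2, fun hw3 => ?_⟩
      rw [Set.eq_empty_iff_forall_notMem] at hdisj
      exact hdisj w ⟨hw1, hw3⟩
    have hballtop : μ (ball m (r/2)) ≠ ⊤ := measure_ball_lt_top.ne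
    have hdiff : μ (closedBall x r \ ball m (r/2))
        = μ (closedBall x r) - μ (ball m (r/2)) :=
      measure_diff hball_sub measurableSet_ball.nullMeasurableSet hballtop
    have hballval : μ (ball m (r/2)) = ENNReal.ofReal ((r/2) ^ n) * c := by
      rw [hc, Measure.addHaar_ball_of_pos μ m (by positivity), finrank_euclideanSpace_fin]
    have hcbval : μ (closedBall x r) = ENNReal.ofReal (r ^ n) * c := by
      rw [hc, Measure.addHaar_closedBall μ x hr0.le, finrank_euclideanSpace_fin]
    have h1 : μ (F ∩ closedBall x r) ≤ ENNReal.ofReal (r ^ n - (r/2) ^ n) * c := by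
      calc μ (F ∩ closedBall x r) ≤ μ (closedBall x r \ ball m (r/2)) :=
            measure_mono hsub
        _ = μ (closedBall x r) - μ (ball m (r/2)) := hdiff
        _ = ENNReal.ofReal (r ^ n) * c - ENNReal.ofReal ((r/2) ^ n) * c := by
            rw [hballval, hcbval]
        _ = (ENNReal.ofReal (r ^ n) - ENNReal.ofReal ((r/2) ^ n)) * c := by
            rw [ENNReal.sub_mul (fun _ _ => hctop)]
        _ = ENNReal.ofReal (r ^ n - (r/2) ^ n) * c := by
            rw [ENNReal.ofReal_sub _ (by positivity)]
    calc μ (F ∩ closedBall x r) / μ (closedBall x r)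
        ≤ (ENNReal.ofReal (r ^ n - (r/2) ^ n) * c) / (ENNReal.ofReal (r ^ n) * c) := by
          rw [hcbval]; exact ENNReal.div_le_div_right h1 _
      _ = ENNReal.ofReal (r ^ n - (r/2) ^ n) / ENNReal.ofReal (r ^ n) :=
          ENNReal.mul_div_mul_right _ _ hc0 hctop
      _ = ENNReal.ofReal ((r ^ n - (r/2) ^ n) / r ^ n) :=
          (ENNReal.ofReal_div_of_pos (by positivity)).symm
      _ = L := by
          rw [hL]
          congr 1
          field_simp
          ring
  -- the limit 1 is ≤ L < 1, contradiction
  have h1leL : (1 : ENNReal) ≤ L := le_of_tendsto hx hbound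
  have : L < 1 := by
    rw [hL]
    apply ENNReal.ofReal_lt_one.2
    have : (0:ℝ) < (1/2:ℝ)^n := by positivity
    linarith
  exact absurd h1leL (not_le.2 this)
end

section
/- Let f : X → X be a map and v : ℕ × X → ℝ a subadditive cocycle over f (i.e., v_{n+m}(x) ≤ v_n(x) + v_m(f^n(x)) for all x, n, m), and suppose ω := sup_{n≥1, x} |v_n(x)|/n < ∞. Then for every x ∈ X, n ≥ 1 and ε ∈ (0, 2ω), there exists 0 ≤ n₁ < n such that (1/k) v_k(f^{n₁}(x)) > (1/n) v_n(x) − ε for all 0 < k ≤ n − n₁, and moreover n − n₁ ≥ εn/(2ω). -/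
/-- Lemma on subadditive cocycles: for every `x`, `n ≥ 1` and `ε ∈ (0, 2ω)` there is a
time `0 ≤ n₁ < n` such that `(1/k) v_k(f^{n₁} x) > (1/n) v_n(x) - ε` for all
`0 < k ≤ n - n₁`, and moreover `n - n₁ ≥ εn/(2ω)`. -/
theorem stmt3 {X : Type*} (f : X → X) (v : ℕ → X → ℝ)
    (hv0 : ∀ x, v 0 x = 0)
    (hsub : ∀ (x : X) (n m : ℕ), v (n + m) x ≤ v n x + v m (f^[n] x))
    (ω : ℝ)
    (hω : IsLUB {r : ℝ | ∃ (n : ℕ) (x : X), 1 ≤ n ∧ r = |v n x| / n} ω)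
    (x : X) (n : ℕ) (hn : 1 ≤ n) (ε : ℝ) (hε0 : 0 < ε) (hε : ε < 2 * ω) :
    ∃ n₁ : ℕ, n₁ < n ∧
      (∀ k : ℕ, 0 < k → k ≤ n - n₁ → v n x / n - ε < v k (f^[n₁] x) / k) ∧
      ε * n / (2 * ω) ≤ (n : ℝ) - n₁ := by
  have hn0 : (0:ℝ) < n := by exact_mod_cast hn
  have hω0 : 0 < ω := by linarith
  set c : ℝ := v n x / n - ε with hc
  set g : ℕ → ℝ := fun m => v m x - c * m with hg
  have habs : ∀ (m : ℕ) (y : X), 1 ≤ m → |v m y| ≤ ω * m := by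
    intro m y hm
    have hmem : |v m y| / m ∈ {r : ℝ | ∃ (n : ℕ) (x : X), 1 ≤ n ∧ r = |v n x| / n} :=
      ⟨m, y, hm, rfl⟩
    have h1 := hω.1 hmem
    have hm0 : (0:ℝ) < m := by exact_mod_cast hm
    rw [div_le_iff₀ hm0] at h1
    linarith
  set S := Finset.range (n+1) with hS
  set T := S.filter (fun m => ∀ j ∈ S, g m ≤ g j) with hT
  have hSne : S.Nonempty := ⟨0, by simp [hS]⟩
  obtain ⟨m₀, hm₀S, hm₀⟩ := S.exists_min_image g hSne
  have hTne : T.Nonempty := ⟨m₀, Finset.mem_filter.2 ⟨hm₀S, hm₀⟩⟩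
  set n₁ := T.max' hTne with hn₁def
  have hn₁T : n₁ ∈ T := T.max'_mem hTne
  have hmin : ∀ j ∈ S, g n₁ ≤ g j := (Finset.mem_filter.1 hn₁T).2
  have hn₁le : n₁ ≤ n := by
    have := (Finset.mem_filter.1 hn₁T).1
    simpa [hS, Nat.lt_succ_iff] using this
  have hlast : ∀ m, n₁ < m → m ≤ n → g n₁ < g m := by
    intro m h1 h2
    by_contra h
    push_neg at h
    have hmT : m ∈ T := Finset.mem_filter.2
      ⟨by simp [hS, Nat.lt_succ_iff, h2], fun j hj => le_trans h (hmin j hj)⟩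
    exact absurd (T.le_max' m hmT) (not_le.2 h1)
  have hg0 : g 0 = 0 := by simp [hg, hv0]
  have hgn : g n = ε * n := by
    simp only [hg, hc]
    field_simp
    ring
  have hgmin0 : g n₁ ≤ 0 := by
    have := hmin 0 (by simp [hS])
    rwa [hg0] at this
  have hn₁lt : n₁ < n := by
    rcases lt_or_eq_of_le hn₁le with h | h
    · exact h
    · exfalso
      rw [h] at hgmin0
      rw [hgn] at hgmin0
      nlinarith
  refine ⟨n₁, hn₁lt, ?_, ?_⟩
  · intro k hk hk'
    have hkn : n₁ + k ≤ n := by omega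
    have hstrict := hlast (n₁ + k) (by omega) hkn
    have hsub' := hsub x n₁ k
    have hk0 : (0:ℝ) < k := by exact_mod_cast hk
    rw [lt_div_iff₀ hk0]
    simp only [hg] at hstrict
    push_cast at hstrict
    nlinarith [hstrict, hsub']
  · have hvn1 : v n₁ x ≤ c * n₁ := by
      simp only [hg] at hgmin0; linarith
    have h2ω : (0:ℝ) < 2 * ω := by linarith
    rw [div_le_iff₀ h2ω]
    rcases Nat.eq_zero_or_pos n₁ with h0 | hpos
    · rw [h0]
      push_cast
      nlinarith
    · have hn₁R : (0:ℝ) < n₁ := by exact_mod_cast hpos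
      have hlow : -(ω * n₁) ≤ v n₁ x := by
        have := (abs_le.1 (habs n₁ x hpos)).1
        linarith
      have hcω : -ω ≤ c := by nlinarith
      have hd1 : 1 ≤ n - n₁ := by omega
      have hupper : v (n - n₁) (f^[n₁] x) ≤ ω * ((n:ℝ) - n₁) := by
        have := habs (n - n₁) (f^[n₁] x) hd1
        have hcast : ((n - n₁ : ℕ) : ℝ) = (n:ℝ) - n₁ := by
          push_cast [Nat.cast_sub hn₁le]; ring
        rw [hcast] at this
        linarith [(abs_le.1 this).2, this]
      have hsubn : v n x ≤ v n₁ x + v (n - n₁) (f^[n₁] x) := by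
        have := hsub x n₁ (n - n₁)
        rwa [Nat.add_sub_cancel' hn₁le] at this
      have hvn_eq : v n x = (c + ε) * n := by
        rw [hc]; field_simp; ring
      have hdnn : (0:ℝ) ≤ (n:ℝ) - n₁ := by
        have : (n₁:ℝ) ≤ n := by exact_mod_cast hn₁le
        linarith
      nlinarith [mul_nonneg (by linarith : (0:ℝ) ≤ c + ω) hdnn]
end

section
/- Let T : X → X be a continuous map on a compact metric space, v : ℕ × X → ℝ a subadditive cocycle over T (v_{n+m}(x) ≤ v_n(x) + v_m(T^n x)) with each v_n bounded on X. Then for every x ∈ X and m ≥ 1, m·v_n(x) ≤ ∑_{i=0}^{m−1} v_i(x) + ∑_{i=0}^{n−m} v_m(T^i x) + ∑_{i=0}^{m−1} v_{r_i}(T^{n−r_i} x) for all n > m, where r_i is the remainder of n − i modulo m. -/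
lemma aux_blocks {X : Type*} (T : X → X) (v : ℕ → X → ℝ)
    (hsub : ∀ (x : X) (n m : ℕ), v (n + m) x ≤ v n x + v m (T^[n] x))
    (m : ℕ) : ∀ (q r : ℕ) (y : X),
    v (q * m + r) y ≤ (∑ j ∈ Finset.range q, v m (T^[j * m] y)) + v r (T^[q * m] y) := by
  intro q
  induction q with
  | zero => intro r y; simp
  | succ q ih =>
    intro r y
    have h1 : (q + 1) * m + r = m + (q * m + r) := by ring
    rw [h1]
    calc v (m + (q * m + r)) y ≤ v m y + v (q * m + r) (T^[m] y) := hsub y m (q*m+r)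
      _ ≤ v m y + ((∑ j ∈ Finset.range q, v m (T^[j * m] (T^[m] y)))
            + v r (T^[q * m] (T^[m] y))) := by
          exact add_le_add_right (ih r (T^[m] y)) _
      _ = (∑ j ∈ Finset.range (q+1), v m (T^[j * m] y)) + v r (T^[(q+1) * m] y) := by
          rw [Finset.sum_range_succ']
          simp only [← Function.iterate_add_apply, Nat.zero_mul,
            Function.iterate_zero_apply]
          have e : ∀ k : ℕ, (k + 1) * m = k * m + m := fun k => by ring
          simp only [e]
          ring

/-- Block-decomposition inequality for a subadditive cocycle:
`m·v_n(x) ≤ ∑_{i<m} v_i(x) + ∑_{i=0}^{n-m} v_m(T^i x) + ∑_{i<m} v_{r_i}(T^{n-r_i} x)`,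
where `r_i` is the remainder of `n - i` modulo `m`. -/
theorem stmt6 {X : Type*} (T : X → X) (v : ℕ → X → ℝ)
    (hv0 : ∀ x, v 0 x = 0)
    (hsub : ∀ (x : X) (n m : ℕ), v (n + m) x ≤ v n x + v m (T^[n] x))
    (hbdd : ∀ n : ℕ, ∃ C : ℝ, ∀ x, |v n x| ≤ C)
    (x : X) (m n : ℕ) (hm : 1 ≤ m) (hmn : m < n) :
    (m : ℝ) * v n x ≤
      (∑ i ∈ Finset.range m, v i x)
        + (∑ i ∈ Finset.range (n - m + 1), v m (T^[i] x))
        + ∑ i ∈ Finset.range m, v ((n - i) % m) (T^[n - (n - i) % m] x) := by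
  have hm0 : 0 < m := hm
  -- per-i inequality
  have per : ∀ i ∈ Finset.range m,
      v n x ≤ v i x + (∑ j ∈ Finset.range ((n - i) / m), v m (T^[i + j * m] x))
        + v ((n - i) % m) (T^[n - (n - i) % m] x) := by
    intro i hi
    rw [Finset.mem_range] at hi
    have hin : i ≤ n := le_of_lt (lt_trans hi hmn)
    set q := (n - i) / m with hq
    set r := (n - i) % m with hr
    have hqr : q * m + r = n - i := Nat.div_add_mod' (n - i) m
    have hn : n = i + (q * m + r) := by omega
    have h1 : v n x ≤ v i x + v (q * m + r) (T^[i] x) := by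
      calc v n x = v (i + (q * m + r)) x := by rw [← hn]
        _ ≤ _ := hsub x i _
    have h2 := aux_blocks T v hsub m q r (T^[i] x)
    have h3 : ∀ j, T^[j * m] (T^[i] x) = T^[i + j * m] x := by
      intro j; rw [← Function.iterate_add_apply]; congr 1; ring
    have h4 : T^[q * m] (T^[i] x) = T^[n - r] x := by
      rw [← Function.iterate_add_apply]; congr 1; omega
    calc v n x ≤ v i x + v (q * m + r) (T^[i] x) := h1
      _ ≤ v i x + ((∑ j ∈ Finset.range q, v m (T^[j*m] (T^[i] x))) + v r (T^[q*m] (T^[i] x))) :=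
          add_le_add_right h2 _
      _ = v i x + (∑ j ∈ Finset.range q, v m (T^[i + j * m] x)) + v r (T^[n - r] x) := by
          rw [h4]; simp only [h3]; ring
  -- sum the per-i inequalities
  have hsum : (m : ℝ) * v n x ≤
      ∑ i ∈ Finset.range m, (v i x + (∑ j ∈ Finset.range ((n - i) / m), v m (T^[i + j * m] x))
        + v ((n - i) % m) (T^[n - (n - i) % m] x)) := by
    have := Finset.sum_le_sum per
    simpa using this
  rw [Finset.sum_add_distrib, Finset.sum_add_distrib] at hsum
  refine hsum.trans_eq ?_
  congr 1
  congr 1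
  -- key reindexing
  rw [Finset.sum_sigma']
  apply Finset.sum_nbij' (fun p => p.1 + p.2 * m) (fun k => ⟨k % m, k / m⟩)
  · rintro ⟨i, j⟩ hp
    simp only [Finset.mem_sigma, Finset.mem_range] at hp ⊢
    obtain ⟨hi, hj⟩ := hp
    have h1 : (j + 1) * m ≤ (n - i) / m * m := Nat.mul_le_mul_right m hj
    have h2 : (n - i) / m * m ≤ n - i := Nat.div_mul_le_self _ _
    have h3 : (j + 1) * m = j * m + m := by ring
    omega
  · intro k hk
    simp only [Finset.mem_range] at hk
    simp only [Finset.mem_sigma, Finset.mem_range]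
    refine ⟨Nat.mod_lt _ hm0, ?_⟩
    have hk' : k / m * m + k % m = k := Nat.div_add_mod' k m
    have h1 : n - k % m = (n - k) + k / m * m := by omega
    rw [h1, Nat.add_mul_div_right _ _ hm0]
    have h2 : 1 ≤ (n - k) / m := (Nat.one_le_div_iff hm0).2 (by omega)
    omega
  · rintro ⟨i, j⟩ hp
    simp only [Finset.mem_sigma, Finset.mem_range] at hp
    obtain ⟨hi, hj⟩ := hp
    have h1 : (i + j * m) % m = i := by
      rw [Nat.add_mul_mod_self_right, Nat.mod_eq_of_lt hi]
    have h2 : (i + j * m) / m = j := by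
      rw [Nat.add_mul_div_right _ _ hm0, Nat.div_eq_of_lt hi]; omega
    simp [h1, h2]
  · intro k hk
    simp [Nat.mod_add_div']
  · rintro ⟨i, j⟩ hp
    rfl
end

section
/- Let Φ_t(u,x) = (θ_t u, φ(t,x,u)) be a continuous skew-product flow on a compact metric space U × M, and suppose lifts L(Q₁),…,L(Q_r) of pairwise disjoint compact sets Q₁,…,Q_r ⊆ M form a Morse decomposition of U × M. Then each Q_i is isolated: there is a neighborhood N of Q_i in M such that φ(ℝ, x, u) ⊆ N implies φ(ℝ, x, u) ⊆ Q_i. -/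
open Filter

/-- If the lifts `L(Q₁), …, L(Q_r)` of pairwise disjoint compact sets `Q₁, …, Q_r ⊆ M`
form a Morse decomposition for a continuous skew-product flow on the compact space
`U × M`, then each `Q_i` is isolated: there is a neighborhood `N` of `Q_i` in `M`
such that any trajectory staying in `N` for all time lies in `Q_i`. -/
theorem stmt9 {U M : Type*} [MetricSpace U] [CompactSpace U]
    [MetricSpace M] [CompactSpace M]
    (Φ : ℝ → U × M → U × M)
    (hcont : Continuous fun p : ℝ × (U × M) => Φ p.1 p.2)
    (hΦ0 : Φ 0 = id)
    (hΦadd : ∀ s t : ℝ, Φ (s + t) = Φ s ∘ Φ t)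
    (r : ℕ) (Q : Fin r → Set M)
    (hQc : ∀ i, IsCompact (Q i))
    (hQdisj : ∀ i j, i ≠ j → Disjoint (Q i) (Q j))
    (L : Fin r → Set (U × M))
    (hL : ∀ i, L i = {p : U × M | ∀ t : ℝ, (Φ t p).2 ∈ Q i})
    (hLc : ∀ i, IsCompact (L i))
    (hLinv : ∀ (i) (t : ℝ), Φ t '' L i = L i)
    (hLdisj : ∀ i j, i ≠ j → Disjoint (L i) (L j))
    (hQproj : ∀ i, Q i = Prod.snd '' L i)
    (hMorse : ∀ p : U × M, (∀ i, p ∉ L i) →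
      ∃ i₁ i₂, i₁ ≠ i₂ ∧ omegaLimit atBot Φ {p} ⊆ L i₁ ∧ omegaLimit atTop Φ {p} ⊆ L i₂) :
    ∀ i, ∃ N : Set M, IsOpen N ∧ Q i ⊆ N ∧
      ∀ p : U × M, (∀ t : ℝ, (Φ t p).2 ∈ N) → ∀ t : ℝ, (Φ t p).2 ∈ Q i := by
  intro i
  -- K = union of other Morse sets
  set K : Set M := ⋃ j ∈ {j | j ≠ i}, Q j with hK
  have hKc : IsCompact K :=
    Set.Finite.isCompact_biUnion (Set.toFinite _) (fun j _ => hQc j)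
  have hdisjK : Disjoint (Q i) K := by
    rw [Set.disjoint_iff_inter_eq_empty, hK]
    ext x
    simp only [Set.mem_inter_iff, Set.mem_iUnion, Set.mem_empty_iff_false, iff_false, not_and,
      not_exists]
    intro hx j hj
    exact fun hxj => (hQdisj j i hj).subset_compl_right hxj hx
  -- separate Q i and K by open sets
  obtain ⟨N, V, hNopen, hVopen, hQN, hKV, hNV⟩ :=
    normal_separation (hQc i).isClosed hKc.isClosed hdisjK
  have hclN : Disjoint (closure N) K := by
    have hsub : closure N ⊆ Vᶜ :=
      closure_minimal (fun x hx hxV => Set.disjoint_left.mp hNV hx hxV)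
        hVopen.isClosed_compl
    exact Set.disjoint_left.mpr fun x hx hxK => hsub hx (hKV hxK)
  refine ⟨N, hNopen, hQN, ?_⟩
  intro p hp
  -- key: any j with a point of Q j in closure N must equal i
  have key : ∀ j : Fin r, ∀ x ∈ Q j, x ∈ closure N → j = i := by
    intro j x hxQ hxN
    by_contra hji
    exact Set.disjoint_left.mp hclN hxN (Set.mem_biUnion hji hxQ)
  -- limit points project into closure N
  have hlim : ∀ (f : Filter ℝ) [NeBot f], ∀ q ∈ omegaLimit f Φ {p}, q.2 ∈ closure N := by
    intro f _ q hq
    rw [omegaLimit_def] at hq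
    have h1 : q ∈ closure (Set.image2 Φ Set.univ {p}) := by
      have := Set.mem_iInter.mp hq Set.univ
      exact Set.mem_iInter.mp this univ_mem
    have hsub : Set.image2 Φ Set.univ {p} ⊆ Prod.snd ⁻¹' closure N := by
      rintro z ⟨t, ht, y, hy, rfl⟩
      rcases hy with rfl
      exact subset_closure (hp t)
    have hcl : IsClosed (Prod.snd ⁻¹' closure N : Set (U × M)) :=
      isClosed_closure.preimage continuous_snd
    exact closure_minimal hsub hcl h1
  by_cases hpL : ∃ j, p ∈ L j
  · obtain ⟨j, hpj⟩ := hpL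
    rw [hL j] at hpj
    have hji : j = i := by
      refine key j (p.2) ?_ (subset_closure ?_)
      · have := hpj 0
        rwa [hΦ0] at this
      · have := hp 0
        rwa [hΦ0] at this
    exact hji ▸ hpj
  · push_neg at hpL
    obtain ⟨i₁, i₂, h12, hα, hω⟩ := hMorse p hpL
    exfalso
    have hne₁ : (omegaLimit atBot Φ {p}).Nonempty :=
      nonempty_omegaLimit atBot Φ {p} (Set.singleton_nonempty p)
    have hne₂ : (omegaLimit atTop Φ {p}).Nonempty :=
      nonempty_omegaLimit atTop Φ {p} (Set.singleton_nonempty p)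
    obtain ⟨q₁, hq₁⟩ := hne₁
    obtain ⟨q₂, hq₂⟩ := hne₂
    have hq₁L : q₁ ∈ L i₁ := hα hq₁
    have hq₂L : q₂ ∈ L i₂ := hω hq₂
    rw [hL i₁] at hq₁L
    rw [hL i₂] at hq₂L
    have h1 : i₁ = i := by
      refine key i₁ q₁.2 ?_ (hlim atBot q₁ hq₁)
      have := hq₁L 0; rwa [hΦ0] at this
    have h2 : i₂ = i := by
      refine key i₂ q₂.2 ?_ (hlim atTop q₂ hq₂)
      have := hq₂L 0; rwa [hΦ0] at this
    exact h12 (h1.trans h2.symm)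
end

section
/- Let T : X → X be continuous on a compact metric space and v : ℕ × X → ℝ a continuous subadditive cocycle over T with sup_{n,x} |v_n(x)|/n < ∞. Then for every x ∈ X there exists a T-invariant Borel probability measure P on X such that liminf_{m→∞} (1/m) ∫ v_m dP ≥ liminf_{n→∞} (1/n) v_n(x). -/
open Filter MeasureTheory Topology BoundedContinuousFunction
open scoped NNReal ENNReal


lemma my_clamp_sum (δ : ℝ) (hδ : 0 ≤ δ) :
    ∀ (N : ℕ) (t : ℝ), 0 ≤ t →
      ∑ i ∈ Finset.range N, min (max (t - i * δ) 0) δ = min t (N * δ) := by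
  intro N
  induction N with
  | zero => intro t ht; simp [ht]
  | succ N ih =>
    intro t ht
    rw [Finset.sum_range_succ, ih t ht]
    rcases le_total t (N * δ) with h | h
    · have h1 : t - N * δ ≤ 0 := by linarith
      rw [max_eq_right h1, min_eq_left hδ, min_eq_left h, add_zero]
      refine (min_eq_left ?_).symm
      have : (N:ℝ) * δ ≤ (N+1 : ℕ) * δ := by
        push_cast
        nlinarith
      linarith
    · have h1 : (0:ℝ) ≤ t - N * δ := by linarith
      rw [min_eq_right h, max_eq_left h1]
      push_cast
      rcases le_total (t - N * δ) δ with h2 | h2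
      · rw [min_eq_left h2]
        have : min t ((N + 1) * δ) = t := min_eq_left (by nlinarith)
        rw [this]; ring
      · rw [min_eq_right h2]
        have : min t ((N + 1) * δ) = (N+1) * δ := min_eq_right (by nlinarith)
        rw [this]; ring



lemma my_exists_ell {X : Type*} [MetricSpace X] [CompactSpace X]
    (T : X → X) (hT : Continuous T) (x : X) :
    ∃ ℓ : (X → ℝ) → ℝ,
      (∀ f g : X → ℝ, Continuous f → Continuous g → ℓ (f + g) = ℓ f + ℓ g) ∧
      (∀ (c : ℝ) (f : X → ℝ), Continuous f → ℓ (c • f) = c * ℓ f) ∧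
      (∀ f : X → ℝ, Continuous f → 0 ≤ f → 0 ≤ ℓ f) ∧
      ℓ (fun _ => 1) = 1 ∧
      (∀ f : X → ℝ, Continuous f → ℓ (fun y => f (T y)) = ℓ f) ∧
      (∀ (f : X → ℝ) (b : ℕ → ℝ) (c : ℝ), Continuous f →
        (∀ᶠ n in atTop, b n ≤ (∑ k ∈ Finset.range n, f (T^[k] x)) / n) →
        Tendsto b atTop (𝓝 c) → c ≤ ℓ f) := by
  classical
  set 𝒰 : Ultrafilter ℕ := Ultrafilter.of atTop with h𝒰
  have hle : (𝒰 : Filter ℕ) ≤ atTop := Ultrafilter.of_le _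
  set emp : (X → ℝ) → ℕ → ℝ :=
    fun f n => (∑ k ∈ Finset.range n, f (T^[k] x)) / n with hemp
  have bound : ∀ f : X → ℝ, Continuous f → ∃ M : ℝ, ∀ y, |f y| ≤ M := by
    intro f hf
    obtain ⟨y0, -, h⟩ := isCompact_univ.exists_isMaxOn ⟨x, Set.mem_univ x⟩
      (hf.abs.continuousOn)
    exact ⟨|f y0|, fun y => h (Set.mem_univ y)⟩
  have boundemp : ∀ (f : X → ℝ) (M : ℝ), (∀ y, |f y| ≤ M) → ∀ n, |emp f n| ≤ M := by
    intro f M hM n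
    have hM0 : 0 ≤ M := le_trans (abs_nonneg _) (hM x)
    rcases Nat.eq_zero_or_pos n with hn | hn
    · simp [hemp, hn, hM0]
    · have h1 : |∑ k ∈ Finset.range n, f (T^[k] x)| ≤ n * M := by
        calc |∑ k ∈ Finset.range n, f (T^[k] x)|
            ≤ ∑ k ∈ Finset.range n, |f (T^[k] x)| := Finset.abs_sum_le_sum_abs _ _
          _ ≤ ∑ _k ∈ Finset.range n, M := Finset.sum_le_sum fun k _ => hM _
          _ = n * M := by simp [mul_comm]
      have hn' : (0:ℝ) < n := by exact_mod_cast hn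
      rw [hemp]
      rw [abs_div, abs_of_pos hn', div_le_iff₀ hn']
      calc |∑ k ∈ Finset.range n, f (T^[k] x)| ≤ n * M := h1
        _ = M * n := mul_comm _ _
  have key : ∀ f : X → ℝ, Continuous f →
      ∃ c, Tendsto (emp f) (𝒰 : Filter ℕ) (𝓝 c) := by
    intro f hf
    obtain ⟨M, hM⟩ := bound f hf
    have h1 : ∀ n, emp f n ∈ Set.Icc (-M) M := fun n => abs_le.mp (boundemp f M hM n)
    have h2 : (𝒰.map (emp f) : Filter ℝ) ≤ Filter.principal (Set.Icc (-M) M) := by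
      rw [Filter.le_principal_iff]
      exact Filter.mem_map.mpr (Filter.univ_mem' h1)
    obtain ⟨c, -, hc⟩ := isCompact_Icc.ultrafilter_le_nhds (𝒰.map (emp f)) h2
    exact ⟨c, hc⟩
  let ℓ : (X → ℝ) → ℝ := fun f => if h : Continuous f then (key f h).choose else 0
  have tendsto_ℓ : ∀ (f : X → ℝ), Continuous f →
      Tendsto (emp f) (𝒰 : Filter ℕ) (𝓝 (ℓ f)) := by
    intro f hf
    simp only [ℓ, dif_pos hf]
    exact (key f hf).choose_spec
  refine ⟨ℓ, ?_, ?_, ?_, ?_, ?_, ?_⟩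
  · intro f g hf hg
    have h1 : emp (f + g) = fun n => emp f n + emp g n := by
      funext n
      simp [hemp, Finset.sum_add_distrib, add_div]
    refine tendsto_nhds_unique (tendsto_ℓ _ (hf.add hg)) ?_
    rw [h1]
    exact (tendsto_ℓ f hf).add (tendsto_ℓ g hg)
  · intro c f hf
    have h1 : emp (c • f) = fun n => c * emp f n := by
      funext n
      rw [hemp]
      simp only [Pi.smul_apply, smul_eq_mul, ← Finset.mul_sum, mul_div_assoc]
    refine tendsto_nhds_unique (tendsto_ℓ _ (hf.const_smul c)) ?_
    rw [h1]
    exact (tendsto_ℓ f hf).const_mul c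
  · intro f hf hf0
    refine ge_of_tendsto' (tendsto_ℓ f hf) fun n => ?_
    exact div_nonneg (Finset.sum_nonneg fun k _ => hf0 _) (Nat.cast_nonneg n)
  · refine tendsto_nhds_unique (tendsto_ℓ _ continuous_const) ?_
    have h1 : ∀ᶠ n in (𝒰 : Filter ℕ), (1:ℝ) = emp (fun _ => 1) n := by
      refine hle ?_
      filter_upwards [Filter.eventually_ge_atTop 1] with n hn
      have hn' : (n:ℝ) ≠ 0 := by positivity
      simp [hemp, hn']
    exact Tendsto.congr' h1 tendsto_const_nhds
  · intro f hf
    obtain ⟨M, hM⟩ := bound f hf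
    have hrepr : emp (fun y => f (T y)) =
        fun n => emp f n + (f (T^[n] x) - f x) / n := by
      funext n
      have h2 : ∑ k ∈ Finset.range n, f (T (T^[k] x)) =
          ∑ k ∈ Finset.range n, f (T^[k] x) + (f (T^[n] x) - f x) := by
        induction n with
        | zero => simp
        | succ n ih =>
          rw [Finset.sum_range_succ, Finset.sum_range_succ, ih,
            Function.iterate_succ_apply']
          ring
      simp only [hemp, h2, add_div]
    have hpert : Tendsto (fun n : ℕ => (f (T^[n] x) - f x) / n) atTop (𝓝 0) := by
      refine squeeze_zero_norm (fun n => ?_) (tendsto_const_div_atTop_nhds_zero_nat (2*M))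
      rcases Nat.eq_zero_or_pos n with hn | hn
      · have hM0 : 0 ≤ M := le_trans (abs_nonneg _) (hM x)
        simp [hn]
      · have hn' : (0:ℝ) < n := by exact_mod_cast hn
        rw [Real.norm_eq_abs, abs_div, abs_of_pos hn', div_le_div_iff_of_pos_right hn']
        calc |f (T^[n] x) - f x| ≤ |f (T^[n] x)| + |f x| := abs_sub _ _
          _ ≤ M + M := add_le_add (hM _) (hM _)
          _ = 2 * M := by ring
    refine tendsto_nhds_unique (tendsto_ℓ _ (hf.comp hT)) ?_
    have := (tendsto_ℓ f hf).add (hpert.mono_left hle)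
    rw [add_zero] at this
    rw [hrepr]
    exact this
  · intro f b c hf hb hbc
    exact le_of_tendsto_of_tendsto (hbc.mono_left hle) (tendsto_ℓ f hf) (hle hb)


theorem my_rmk {X : Type*} [MetricSpace X] [CompactSpace X] [Nonempty X]
    [MeasurableSpace X] [BorelSpace X]
    (ℓ : (X → ℝ) → ℝ)
    (hadd : ∀ f g : X → ℝ, Continuous f → Continuous g → ℓ (f + g) = ℓ f + ℓ g)
    (hsmul : ∀ (c : ℝ) (f : X → ℝ), Continuous f → ℓ (c • f) = c * ℓ f)
    (hpos : ∀ f : X → ℝ, Continuous f → 0 ≤ f → 0 ≤ ℓ f)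
    (hone : ℓ (fun _ => 1) = 1) :
    ∃ μ : Measure X, IsProbabilityMeasure μ ∧
      ∀ f : X → ℝ, Continuous f → ∫ y, f y ∂μ = ℓ f := by
  classical
  -- basic consequences
  have hzero : ℓ 0 = 0 := by
    have h := hsmul 0 0 continuous_const
    have h0 : (0:ℝ) • (0 : X → ℝ) = 0 := by simp
    rw [h0] at h
    simpa using h
  have hmono : ∀ f g : X → ℝ, Continuous f → Continuous g → f ≤ g → ℓ f ≤ ℓ g := by
    intro f g hf hg hfg
    have h1 : g = f + (g - f) := by ring
    have h2 : ℓ g = ℓ f + ℓ (g - f) := by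
      conv_lhs => rw [h1]
      exact hadd _ _ hf (hg.sub hf)
    have h3 : 0 ≤ ℓ (g - f) := hpos _ (hg.sub hf) (by intro y; simpa using hfg y)
    linarith
  have hconst : ∀ c : ℝ, ℓ (fun _ => c) = c := by
    intro c
    have h := hsmul c (fun _ => 1) continuous_const
    have h0 : c • (fun _ : X => (1:ℝ)) = fun _ => c := by funext y; simp
    rw [h0, hone, mul_one] at h
    exact h
  -- the linear functional on CompactlySupportedContinuousMap X ℝ≥0
  have hcoe : ∀ f : CompactlySupportedContinuousMap X ℝ≥0, Continuous (fun y => (f y : ℝ)) :=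
    fun f => NNReal.continuous_coe.comp f.continuous
  have hcoe0 : ∀ f : CompactlySupportedContinuousMap X ℝ≥0, (0:X → ℝ) ≤ fun y => (f y : ℝ) :=
    fun f y => (f y).coe_nonneg
  set Λ : (CompactlySupportedContinuousMap X ℝ≥0) →ₗ[ℝ≥0] ℝ≥0 :=
    { toFun := fun f => Real.toNNReal (ℓ (fun y => (f y : ℝ)))
      map_add' := by
        intro f g
        have h1 : (fun y => (((f + g) y : ℝ≥0) : ℝ)) =
            (fun y => (f y : ℝ)) + (fun y => (g y : ℝ)) := by
          funext y; push_cast [CompactlySupportedContinuousMap.add_apply]; rfl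
        simp only [h1, hadd _ _ (hcoe f) (hcoe g)]
        exact Real.toNNReal_add (hpos _ (hcoe f) (hcoe0 f)) (hpos _ (hcoe g) (hcoe0 g))
      map_smul' := by
        intro c f
        have h1 : (fun y => (((c • f) y : ℝ≥0) : ℝ)) = (c:ℝ) • fun y => (f y : ℝ) := by
          funext y
          simp [CompactlySupportedContinuousMap.coe_smul, NNReal.smul_def]
        simp only [h1, hsmul _ _ (hcoe f), RingHom.id_apply]
        rw [Real.toNNReal_mul (by positivity)]
        simp [NNReal.smul_def]
        } with hΛdef
  have hΛ : ∀ f : CompactlySupportedContinuousMap X ℝ≥0, ((Λ f : ℝ≥0) : ℝ) = ℓ (fun y => (f y : ℝ)) := by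
    intro f
    simp only [hΛdef, LinearMap.coe_mk, AddHom.coe_mk]
    exact Real.coe_toNNReal _ (hpos _ (hcoe f) (hcoe0 f))
  letI : One (CompactlySupportedContinuousMap X ℝ≥0) := ⟨CompactlySupportedContinuousMap.continuousMapEquiv 1⟩
  have hone1 : ∀ y, (1 : CompactlySupportedContinuousMap X ℝ≥0) y = 1 := fun y => rfl
  have hΛone : ((Λ 1 : ℝ≥0) : ℝ) = 1 := by
    rw [hΛ]
    simpa [hone1] using hconst 1
  have hΛmono : ∀ f g : CompactlySupportedContinuousMap X ℝ≥0, (∀ y, f y ≤ g y) → Λ f ≤ Λ g := by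
    intro f g hfg
    rw [← NNReal.coe_le_coe, hΛ, hΛ]
    exact hmono _ _ (hcoe f) (hcoe g) fun y => by exact_mod_cast hfg y
  -- the content
  set C : Content X :=
    { toFun := rieszContentAux Λ
      mono' := fun K1 K2 h => rieszContentAux_mono Λ h
      sup_le' := rieszContentAux_sup_le Λ
      sup_disjoint' := by
        intro K1 K2 hdis h1c h2c
        refine le_antisymm (rieszContentAux_sup_le Λ K1 K2) ?_
        refine le_csInf (rieszContentAux_image_nonempty Λ _) ?_
        rintro b ⟨f, hf, rfl⟩
        obtain ⟨e, he0, he1, he01⟩ := exists_continuous_zero_one_of_isClosed h1c h2c hdis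
        set u : X → ℝ≥0 := fun y => Real.toNNReal (1 - e y) with hu
        set w : X → ℝ≥0 := fun y => Real.toNNReal (e y) with hw
        have hucont : Continuous u := continuous_real_toNNReal.comp (continuous_const.sub e.continuous)
        have hwcont : Continuous w := continuous_real_toNNReal.comp e.continuous
        have huw : ∀ y, u y + w y = 1 := by
          intro y
          obtain ⟨hy0, hy1⟩ := he01 y
          rw [hu, hw, ← Real.toNNReal_add (by linarith) hy0]
          norm_num
        set g1 : CompactlySupportedContinuousMap X ℝ≥0 :=
          CompactlySupportedContinuousMap.continuousMapEquiv ⟨fun y => f y * u y, f.continuous.mul hucont⟩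
        set g2 : CompactlySupportedContinuousMap X ℝ≥0 :=
          CompactlySupportedContinuousMap.continuousMapEquiv ⟨fun y => f y * w y, f.continuous.mul hwcont⟩
        have hf12 : f = g1 + g2 := by
          ext y
          have : (g1 + g2) y = f y * u y + f y * w y := rfl
          rw [this, ← mul_add, huw y, mul_one]
        have hg1 : ∀ y ∈ K1, (1:ℝ≥0) ≤ g1 y := by
          intro y hy
          have hu1 : u y = 1 := by
            rw [hu]
            simp [he0 hy]
          show (1:ℝ≥0) ≤ f y * u y
          rw [hu1, mul_one]
          exact hf y (Set.mem_union_left _ hy)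
        have hg2 : ∀ y ∈ K2, (1:ℝ≥0) ≤ g2 y := by
          intro y hy
          have hw1 : w y = 1 := by
            rw [hw]
            simp [he1 hy]
          show (1:ℝ≥0) ≤ f y * w y
          rw [hw1, mul_one]
          exact hf y (Set.mem_union_right _ hy)
        calc rieszContentAux Λ K1 + rieszContentAux Λ K2
            ≤ Λ g1 + Λ g2 := add_le_add (rieszContentAux_le Λ hg1) (rieszContentAux_le Λ hg2)
          _ = Λ f := by rw [hf12, map_add] } with hCdef
  set μ : Measure X := C.measure with hμdef
  -- μ is a probability measure
  have hCuniv : C.toFun ⟨Set.univ, isCompact_univ⟩ = Λ 1 := by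
    refine le_antisymm ?_ ?_
    · exact rieszContentAux_le Λ (fun y _ => by simp [hone1])
    · refine le_csInf (rieszContentAux_image_nonempty Λ _) ?_
      rintro b ⟨f, hf, rfl⟩
      exact hΛmono 1 f fun y => by simpa [hone1] using hf y (Set.mem_univ y)
  have huniv : μ Set.univ = 1 := by
    rw [hμdef, C.measure_apply MeasurableSet.univ,
      C.outerMeasure_of_isOpen Set.univ isOpen_univ]
    have h1 : C.innerContent ⟨Set.univ, isOpen_univ⟩ =
        (C.toFun ⟨Set.univ, isCompact_univ⟩ : ℝ≥0∞) := by
      refine le_antisymm ?_ ?_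
      · exact C.innerContent_le _ _ (by exact subset_rfl)
      · exact C.le_innerContent _ _ (by exact subset_rfl)
    rw [h1, hCuniv]
    rw [show ((Λ 1 : ℝ≥0) : ℝ≥0∞) = ((1:ℝ≥0):ℝ≥0∞) from by
      norm_cast
      exact_mod_cast hΛone]
    simp
  haveI hprob : IsProbabilityMeasure μ := ⟨huniv⟩
  -- easy inequality between content and measure on compacts
  have hKle : ∀ K : TopologicalSpace.Compacts X,
      ((C.toFun K : ℝ≥0) : ℝ) ≤ (μ (K : Set X)).toReal := by
    intro K
    have h1 : (C.toFun K : ℝ≥0∞) ≤ μ (K : Set X) := by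
      rw [hμdef, C.measure_apply K.isCompact.isClosed.measurableSet]
      exact C.le_outerMeasure_compacts K
    have h2 := ENNReal.toReal_mono (measure_ne_top μ _) h1
    rwa [ENNReal.coe_toReal] at h2
  -- integrability of continuous functions
  have hint : ∀ f : X → ℝ, Continuous f → Integrable f μ := by
    intro f hf
    exact (BoundedContinuousFunction.mkOfCompact ⟨f, hf⟩).integrable μ
  -- key inequality: ℓ g ≤ ∫ g for continuous nonneg g
  have hrep1 : ∀ g : X → ℝ, Continuous g → (0 ≤ g) → ℓ g ≤ ∫ y, g y ∂μ := by
    intro g hg hg0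
    obtain ⟨y0, -, hy0⟩ := isCompact_univ.exists_isMaxOn
      ⟨Classical.arbitrary X, Set.mem_univ _⟩ hg.continuousOn
    set B : ℝ := g y0 with hB
    have hBg : ∀ y, g y ≤ B := fun y => hy0 (Set.mem_univ y)
    refine le_of_forall_pos_le_add ?_
    intro δ hδ
    obtain ⟨N, hN⟩ : ∃ N : ℕ, B ≤ N * δ := by
      obtain ⟨N, hN⟩ := exists_nat_ge (B / δ)
      exact ⟨N, by rwa [div_le_iff₀ hδ] at hN⟩
    -- the compact level sets
    set K : ℕ → TopologicalSpace.Compacts X := fun i =>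
      ⟨{y | (i:ℝ) * δ ≤ g y}, (isClosed_le continuous_const hg).isCompact⟩ with hK
    -- the slices
    set fi : ℕ → X → ℝ := fun i y => min (max (g y - i * δ) 0) δ with hfi
    have hficont : ∀ i, Continuous (fi i) :=
      fun i => ((hg.sub continuous_const).max continuous_const).min continuous_const
    have hfi0 : ∀ i, (0:X → ℝ) ≤ fi i := fun i y => le_min (le_max_right _ _) hδ.le
    have hsumfi : ∀ y, ∑ i ∈ Finset.range N, fi i y = g y := by
      intro y
      rw [hfi]
      simp only []
      rw [my_clamp_sum δ hδ.le N (g y) (hg0 y)]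
      exact min_eq_left ((hBg y).trans hN)
    -- upper bound for ℓ (fi i) by the content
    have hupper : ∀ i, ℓ (fi i) ≤ δ * ((C.toFun (K i) : ℝ≥0) : ℝ) := by
      intro i
      refine le_of_forall_pos_le_add ?_
      intro ε hε
      have hεδ : (0:ℝ≥0) < Real.toNNReal (ε / δ) := by
        rw [Real.toNNReal_pos]
        positivity
      obtain ⟨h, hh1, hhΛ⟩ := exists_lt_rieszContentAux_add_pos Λ (K i) hεδ
      have hpt : fi i ≤ (δ : ℝ) • (fun y => (h y : ℝ)) := by
        intro y
        by_cases hy : (i:ℝ) * δ ≤ g y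
        · have h1y : (1:ℝ) ≤ (h y : ℝ) := by exact_mod_cast hh1 y hy
          calc fi i y ≤ δ := min_le_right _ _
            _ = δ * 1 := (mul_one δ).symm
            _ ≤ δ * (h y : ℝ) := by nlinarith
        · have h0 : max (g y - i * δ) 0 = 0 := max_eq_right (by push_neg at hy; linarith)
          show min (max (g y - i * δ) 0) δ ≤ δ * (h y : ℝ)
          rw [h0, min_eq_left hδ.le]
          positivity
      calc ℓ (fi i) ≤ ℓ ((δ:ℝ) • fun y => (h y : ℝ)) :=
            hmono _ _ (hficont i) ((hcoe h).const_smul δ) hpt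
        _ = δ * ℓ (fun y => (h y : ℝ)) := hsmul _ _ (hcoe h)
        _ = δ * ((Λ h : ℝ≥0) : ℝ) := by rw [hΛ]
        _ ≤ δ * (((C.toFun (K i) : ℝ≥0) : ℝ) + ε / δ) := by
            have := hhΛ.le
            have h2 : ((Λ h : ℝ≥0) : ℝ) ≤
                ((C.toFun (K i) : ℝ≥0) : ℝ) + ((Real.toNNReal (ε/δ) : ℝ≥0) : ℝ) := by
              exact_mod_cast this
            rw [Real.coe_toNNReal _ (by positivity)] at h2
            nlinarith
        _ = δ * ((C.toFun (K i) : ℝ≥0) : ℝ) + ε := by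
            field_simp
    -- lower bound for the integral of fi i
    have hlowerint : ∀ i, δ * (μ (K (i+1) : Set X)).toReal ≤ ∫ y, fi i y ∂μ := by
      intro i
      have hind : ∀ y, Set.indicator (K (i+1) : Set X) (fun _ => δ) y ≤ fi i y := by
        intro y
        by_cases hy : y ∈ (K (i+1) : Set X)
        · rw [Set.indicator_of_mem hy]
          have hgy : ((i:ℝ)+1) * δ ≤ g y := by
            have : ((i+1 : ℕ):ℝ) * δ ≤ g y := hy
            push_cast at this
            linarith
          refine le_min (le_max_of_le_left (by nlinarith)) le_rfl
        · rw [Set.indicator_of_notMem hy]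
          exact hfi0 i y
      have hmeas : MeasurableSet (K (i+1) : Set X) := (K (i+1)).isCompact.isClosed.measurableSet
      have h1 := integral_mono ((integrable_const δ).indicator hmeas) (hint _ (hficont i)) hind
      rwa [integral_indicator_const δ hmeas, smul_eq_mul, mul_comm] at h1
    -- content shifted comparison
    have hshift : ∑ i ∈ Finset.range N, ((C.toFun (K i) : ℝ≥0) : ℝ) ≤
        ((C.toFun (K 0) : ℝ≥0) : ℝ) + ∑ i ∈ Finset.range N, ((C.toFun (K (i+1)) : ℝ≥0) : ℝ) := by
      have h1 : ∑ i ∈ Finset.range N, ((C.toFun (K i) : ℝ≥0) : ℝ) ≤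
          ∑ i ∈ Finset.range (N+1), ((C.toFun (K i) : ℝ≥0) : ℝ) := by
        rw [Finset.sum_range_succ]
        have : (0:ℝ) ≤ ((C.toFun (K N) : ℝ≥0) : ℝ) := NNReal.coe_nonneg _
        linarith
      rw [Finset.sum_range_succ'] at h1
      linarith
    have hK0 : ((C.toFun (K 0) : ℝ≥0) : ℝ) ≤ 1 := by
      have h1 : C.toFun (K 0) ≤ Λ 1 := rieszContentAux_le Λ (fun y _ => by simp [hone1])
      calc ((C.toFun (K 0) : ℝ≥0) : ℝ) ≤ ((Λ 1 : ℝ≥0) : ℝ) := by exact_mod_cast h1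
        _ = 1 := hΛone
    -- ℓ over finite sums
    have hellsum : ∀ s : Finset ℕ, ℓ (fun y => ∑ i ∈ s, fi i y) = ∑ i ∈ s, ℓ (fi i) := by
      intro s
      induction s using Finset.induction_on with
      | empty => simp only [Finset.sum_empty]; exact hzero
      | @insert a s' hnotmem ih =>
        have h1 : (fun y => ∑ i ∈ insert a s', fi i y) =
            fi a + fun y => ∑ i ∈ s', fi i y := by
          funext y
          simp [Finset.sum_insert hnotmem]
        rw [h1, hadd _ _ (hficont a) (by exact continuous_finset_sum s' fun i _ => hficont i),
          Finset.sum_insert hnotmem, ih]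
    -- assemble
    have hgsum : ℓ g = ∑ i ∈ Finset.range N, ℓ (fi i) := by
      rw [← hellsum]
      congr 1
      funext y
      exact (hsumfi y).symm
    have hintsum : ∫ y, g y ∂μ = ∑ i ∈ Finset.range N, ∫ y, fi i y ∂μ := by
      rw [← integral_finset_sum _ (fun i _ => hint _ (hficont i))]
      congr 1
      funext y
      exact (hsumfi y).symm
    calc ℓ g = ∑ i ∈ Finset.range N, ℓ (fi i) := hgsum
      _ ≤ ∑ i ∈ Finset.range N, δ * ((C.toFun (K i) : ℝ≥0) : ℝ) :=
          Finset.sum_le_sum fun i _ => hupper i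
      _ = δ * ∑ i ∈ Finset.range N, ((C.toFun (K i) : ℝ≥0) : ℝ) := by
          rw [Finset.mul_sum]
      _ ≤ δ * (((C.toFun (K 0) : ℝ≥0) : ℝ) +
            ∑ i ∈ Finset.range N, ((C.toFun (K (i+1)) : ℝ≥0) : ℝ)) := by nlinarith
      _ ≤ δ * (1 + ∑ i ∈ Finset.range N, (μ (K (i+1) : Set X)).toReal) := by
          have h2 : ∑ i ∈ Finset.range N, ((C.toFun (K (i+1)) : ℝ≥0) : ℝ) ≤
              ∑ i ∈ Finset.range N, (μ (K (i+1) : Set X)).toReal :=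
            Finset.sum_le_sum fun i _ => hKle (K (i+1))
          nlinarith
      _ = δ + ∑ i ∈ Finset.range N, δ * (μ (K (i+1) : Set X)).toReal := by
          rw [mul_add, mul_one, Finset.mul_sum]
      _ ≤ δ + ∑ i ∈ Finset.range N, ∫ y, fi i y ∂μ :=
          add_le_add_right (Finset.sum_le_sum fun i _ => hlowerint i) δ
      _ = ∫ y, g y ∂μ + δ := by rw [← hintsum]; ring
  -- full representation
  refine ⟨μ, hprob, ?_⟩
  intro f hf
  obtain ⟨y0, -, hy0⟩ := isCompact_univ.exists_isMaxOn
    ⟨Classical.arbitrary X, Set.mem_univ _⟩ hf.abs.continuousOn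
  set M : ℝ := |f y0| with hM
  have hMf : ∀ y, |f y| ≤ M := fun y => hy0 (Set.mem_univ y)
  have h1 : ℓ (fun y => f y + M) = ℓ f + M := by
    have := hadd f (fun _ => M) hf continuous_const
    rw [hconst] at this
    exact this
  have h2 : ℓ (fun y => M - f y) = M - ℓ f := by
    have ha := hadd (fun _ => M) (-f) continuous_const hf.neg
    have hb : ℓ (-f) = - ℓ f := by
      have := hsmul (-1) f hf
      have h0 : (-1:ℝ) • f = -f := by funext y; simp
      rw [h0] at this
      linarith [this]
    have hc : ((fun _ : X => M) + -f) = fun y => M - f y := by funext y; simp; ring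
    rw [hc, hconst, hb] at ha
    linarith [ha]
  have h3 : ∫ y, (f y + M) ∂μ = (∫ y, f y ∂μ) + M := by
    rw [integral_add (hint f hf) (integrable_const M)]
    simp
  have h4 : ∫ y, (M - f y) ∂μ = M - ∫ y, f y ∂μ := by
    rw [integral_sub (integrable_const M) (hint f hf)]
    simp
  have h5 := hrep1 (fun y => f y + M) (hf.add continuous_const)
    (fun y => by have := (abs_le.mp (hMf y)).1; simp only [Pi.zero_apply]; linarith)
  have h6 := hrep1 (fun y => M - f y) (continuous_const.sub hf)
    (fun y => by have := (abs_le.mp (hMf y)).2; simp only [Pi.zero_apply]; linarith)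
  rw [h1, h3] at h5
  rw [h2, h4] at h6
  linarith



/-- For a continuous subadditive cocycle `v` over a continuous map `T` of a compact
metric space with `sup_{n,x} |v_n(x)|/n < ∞`, for every `x` there is a `T`-invariant
Borel probability measure `P` with
`liminf_m (1/m) ∫ v_m dP ≥ liminf_n (1/n) v_n(x)`. -/
theorem stmt11 {X : Type*} [MetricSpace X] [CompactSpace X] [Nonempty X]
    [MeasurableSpace X] [BorelSpace X]
    (T : X → X) (hT : Continuous T)
    (v : ℕ → X → ℝ) (hcont : ∀ n, Continuous (v n))
    (hsub : ∀ (x : X) (n m : ℕ), v (n + m) x ≤ v n x + v m (T^[n] x))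
    (ω : ℝ) (hω : ∀ n : ℕ, 1 ≤ n → ∀ x, |v n x| ≤ n * ω)
    (x : X) :
    ∃ P : Measure X, IsProbabilityMeasure P ∧ P.map T = P ∧
      liminf (fun n : ℕ => v n x / n) atTop ≤
        liminf (fun m : ℕ => (1 / (m : ℝ)) * ∫ y, v m y ∂P) atTop := by
  classical
  obtain ⟨ℓ, hadd, hsmul, hpos, hone, hinv, hlow⟩ := my_exists_ell T hT x
  obtain ⟨P, hP, hrep⟩ := my_rmk ℓ hadd hsmul hpos hone
  haveI := hP
  set L := liminf (fun n : ℕ => v n x / n) atTop with hL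
  have hω0 : 0 ≤ ω := by
    have h1 := hω 1 le_rfl x
    have h2 : (0:ℝ) ≤ |v 1 x| := abs_nonneg _
    simp only [Nat.cast_one, one_mul] at h1
    linarith
  have hbd : ∀ n : ℕ, |v n x / n| ≤ ω := by
    intro n
    rcases Nat.eq_zero_or_pos n with hn | hn
    · simp [hn, hω0]
    · have hn' : (0:ℝ) < n := by exact_mod_cast hn
      rw [abs_div, abs_of_pos hn', div_le_iff₀ hn']
      calc |v n x| ≤ n * ω := hω n hn x
        _ = ω * n := mul_comm _ _
  have hbdd : IsBoundedUnder (· ≥ ·) atTop (fun n : ℕ => v n x / n) := by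
    refine ⟨-ω, ?_⟩
    rw [Filter.eventually_map]
    filter_upwards with n
    have := (abs_le.mp (hbd n)).1
    simpa using this
  -- the key lower bound for ℓ (v m)
  have hvm : ∀ m : ℕ, 1 ≤ m → (m:ℝ) * L ≤ ℓ (v m) := by
    intro m hm
    have hm' : (0:ℝ) < m := by exact_mod_cast hm
    have core : ∀ ε : ℝ, 0 < ε → (L - ε) * m ≤ ℓ (v m) := by
      intro ε hε
      have hlt : L - ε < liminf (fun n : ℕ => v n x / n) atTop := by
        rw [← hL]; linarith
      have hev := eventually_lt_of_lt_liminf hlt hbdd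
      obtain ⟨N0, hN0⟩ := eventually_atTop.mp hev
      set A : ℝ := ∑ j ∈ Finset.range m, v j x with hA
      set c0 : ℝ := ∑ i ∈ Finset.range m, (i:ℝ) with hc0
      set b : ℕ → ℝ := fun n => ((L - ε) * (m * n + c0) - A) / n with hb
      have hbtend : Tendsto b atTop (𝓝 ((L - ε) * m)) := by
        have h1 : Tendsto (fun n : ℕ => (L - ε) * m + ((L - ε) * c0 - A) / n) atTop
            (𝓝 ((L - ε) * m + 0)) :=
          tendsto_const_nhds.add (tendsto_const_div_atTop_nhds_zero_nat _)
        rw [add_zero] at h1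
        refine h1.congr' ?_
        filter_upwards [eventually_ge_atTop 1] with n hn
        have hn' : (n:ℝ) ≠ 0 := by positivity
        rw [hb]
        field_simp
        ring
      have hevb : ∀ᶠ n in atTop, b n ≤ (∑ k ∈ Finset.range n, v m (T^[k] x)) / n := by
        filter_upwards [eventually_ge_atTop (max m (max N0 1))] with n hn
        have hnm : m ≤ n := le_trans (le_max_left _ _) hn
        have hnN0 : N0 ≤ n := le_trans (le_trans (le_max_left _ _) (le_max_right _ _)) hn
        have hn1 : 1 ≤ n := le_trans (le_trans (le_max_right _ _) (le_max_right _ _)) hn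
        have hnpos : (0:ℝ) < n := by exact_mod_cast hn1
        have step1 : ∑ k ∈ Finset.range n, (v (k + m) x - v k x) ≤
            ∑ k ∈ Finset.range n, v m (T^[k] x) := by
          refine Finset.sum_le_sum fun k _ => ?_
          have := hsub x k m
          linarith
        have step2 : ∑ k ∈ Finset.range n, v (k + m) x =
            ∑ j ∈ Finset.Ico m (n + m), v j x := by
          rw [Finset.sum_Ico_eq_sum_range]
          simp only [Nat.add_sub_cancel]
          refine Finset.sum_congr rfl fun k _ => ?_
          rw [Nat.add_comm]
        have step3 : ∑ j ∈ Finset.Ico m (n + m), v j x =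
            ∑ j ∈ Finset.Ico m n, v j x + ∑ j ∈ Finset.Ico n (n + m), v j x :=
          (Finset.sum_Ico_consecutive _ hnm (Nat.le_add_right n m)).symm
        have step4 : ∑ k ∈ Finset.range n, v k x =
            A + ∑ j ∈ Finset.Ico m n, v j x := by
          rw [hA, Finset.range_eq_Ico, Finset.range_eq_Ico]
          exact (Finset.sum_Ico_consecutive (fun j => v j x) (Nat.zero_le m) hnm).symm
        have step5 : ∑ j ∈ Finset.Ico n (n + m), ((j:ℝ) * (L - ε)) ≤
            ∑ j ∈ Finset.Ico n (n + m), v j x := by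
          refine Finset.sum_le_sum fun j hj => ?_
          obtain ⟨hj1, hj2⟩ := Finset.mem_Ico.mp hj
          have hjN0 : N0 ≤ j := le_trans hnN0 hj1
          have hj1' : 1 ≤ j := le_trans hn1 hj1
          have hjpos : (0:ℝ) < j := by exact_mod_cast hj1'
          have := hN0 j hjN0
          rw [lt_div_iff₀ hjpos] at this
          linarith
        have step6 : ∑ j ∈ Finset.Ico n (n + m), ((j:ℝ) * (L - ε)) =
            (L - ε) * (m * n + c0) := by
          rw [Finset.sum_Ico_eq_sum_range]
          simp only [Nat.add_sub_cancel_left]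
          rw [hc0]
          push_cast
          rw [← Finset.sum_mul, Finset.sum_add_distrib, Finset.sum_const,
            Finset.card_range, nsmul_eq_mul]
          ring
        have key : (L - ε) * (m * n + c0) - A ≤ ∑ k ∈ Finset.range n, v m (T^[k] x) := by
          have h1 : ∑ k ∈ Finset.range n, (v (k + m) x - v k x) =
              ∑ j ∈ Finset.Ico n (n + m), v j x - A := by
            rw [Finset.sum_sub_distrib, step2, step3, step4]
            ring
          rw [h1] at step1
          rw [← step6] at *
          linarith
        rw [hb]
        exact div_le_div_of_nonneg_right key hnpos.le
      exact hlow (v m) b ((L - ε) * m) (hcont m) hevb hbtend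
    refine le_of_forall_pos_le_add fun ε hε => ?_
    have h1 := core (ε / m) (by positivity)
    have h2 : (L - ε / m) * m = m * L - ε := by field_simp
    linarith
  -- integrability
  have hintg : ∀ f : X → ℝ, Continuous f → Integrable f P := by
    intro f hf
    exact (BoundedContinuousFunction.mkOfCompact ⟨f, hf⟩).integrable P
  refine ⟨P, hP, ?_, ?_⟩
  · -- invariance
    have hTmeas : Measurable T := hT.measurable
    haveI : IsProbabilityMeasure (P.map T) := Measure.isProbabilityMeasure_map hTmeas.aemeasurable
    refine ext_of_forall_lintegral_eq_of_IsFiniteMeasure ?_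
    intro f
    have hfc : Continuous fun y => (f y : ℝ) := NNReal.continuous_coe.comp f.continuous
    have hfTc : Continuous fun y => (f (T y) : ℝ) := hfc.comp hT
    rw [lintegral_map (f.continuous.measurable.coe_nnreal_ennreal) hTmeas]
    have e1 : ∫⁻ y, (f (T y) : ℝ≥0∞) ∂P = ENNReal.ofReal (∫ y, (f (T y) : ℝ) ∂P) := by
      rw [ofReal_integral_eq_lintegral_ofReal (hintg _ hfTc)
        (Filter.Eventually.of_forall fun y => (f (T y)).coe_nonneg)]
      congr 1
      funext y
      rw [ENNReal.ofReal_coe_nnreal]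
    have e2 : ∫⁻ y, (f y : ℝ≥0∞) ∂P = ENNReal.ofReal (∫ y, (f y : ℝ) ∂P) := by
      rw [ofReal_integral_eq_lintegral_ofReal (hintg _ hfc)
        (Filter.Eventually.of_forall fun y => (f y).coe_nonneg)]
      congr 1
      funext y
      rw [ENNReal.ofReal_coe_nnreal]
    rw [e1, e2, hrep _ hfTc, hrep _ hfc, hinv _ hfc]
  · -- the liminf inequality
    have hev1 : ∀ᶠ m : ℕ in atTop, L ≤ (1 / (m:ℝ)) * ∫ y, v m y ∂P := by
      filter_upwards [eventually_ge_atTop 1] with m hm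
      have hm' : (0:ℝ) < m := by exact_mod_cast hm
      have h1 : ∫ y, v m y ∂P = ℓ (v m) := hrep _ (hcont m)
      have h2 := hvm m hm
      rw [h1]
      have h3 : (1 / (m:ℝ)) * ((m:ℝ) * L) = L := by field_simp
      calc L = (1 / (m:ℝ)) * ((m:ℝ) * L) := h3.symm
        _ ≤ (1 / (m:ℝ)) * ℓ (v m) := by
            have : (0:ℝ) < 1 / m := by positivity
            nlinarith
    have hcob : IsCoboundedUnder (· ≥ ·) atTop (fun m : ℕ => (1 / (m:ℝ)) * ∫ y, v m y ∂P) := by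
      refine Filter.IsBoundedUnder.isCoboundedUnder_ge ⟨ω, ?_⟩
      rw [Filter.eventually_map]
      filter_upwards [eventually_ge_atTop 1] with m hm
      have hm' : (0:ℝ) < m := by exact_mod_cast hm
      have h1 : ‖∫ y, v m y ∂P‖ ≤ ((m:ℝ) * ω) * (P Set.univ).toReal :=
        norm_integral_le_of_norm_le_const
          (Filter.Eventually.of_forall fun y => by
            rw [Real.norm_eq_abs]; exact hω m hm y)
      rw [measure_univ] at h1
      simp only [ENNReal.toReal_one, mul_one] at h1
      have h2 := (abs_le.mp (by rwa [Real.norm_eq_abs] at h1)).2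
      calc (1 / (m:ℝ)) * ∫ y, v m y ∂P ≤ (1 / (m:ℝ)) * ((m:ℝ) * ω) := by
            have : (0:ℝ) < 1 / m := by positivity
            nlinarith
        _ = ω := by field_simp
    exact le_liminf_of_le hcob hev1
end
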